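/- arXiv:1108.2542 — 2 statements merged into one kernel-verified Lean document; each statement's English description precedes it below -/
import Mathlib

section
/- Let G be a finite connected simple graph, T a spanning tree of G, G̃ the lift of G with respect to T, and F the cut-indicator map. Then for every pair of adjacent vertices x, y of G̃, ‖F(x) − F(y)‖₁ = 1; consequently ‖F(x) − F(y)‖₁ ≤ d_{G̃}(x,y) for all x, y ∈ V(G̃), i.e., F is 1-Lipschitz. -/
open SimpleGraph

noncomputable section
attribute [local instance] Classical.propDecidable

variable {V : Type*}

/-- The set `S` of edges of `G` not in the spanning tree `T`. -/
def nonTreeEdges (G T : SimpleGraph V) : Set (Sym2 V) := G.edgeSet \ T.edgeSet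

/-- The lift `G̃` of `G` with respect to the spanning tree `T`: its vertices are the pairs
`(u, f)` with `u ∈ V(G)` and `f : S → ZMod 2`; `(u,f)` is adjacent to `(v,g)` iff
`uv ∈ E(G)` and `g` agrees with `f` except that `g(uv) = f(uv) + 1` when `uv ∈ S`
(so `g = f` when `uv ∈ E(T)`). -/
def liftGraph (G T : SimpleGraph V) :
    SimpleGraph (V × (nonTreeEdges G T → ZMod 2)) where
  Adj p q := G.Adj p.1 q.1 ∧
    q.2 = fun e => p.2 e + (if (e : Sym2 V) = s(p.1, q.1) then 1 else 0)
  symm := ⟨by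
    rintro p q ⟨hadj, hf⟩
    refine ⟨hadj.symm, ?_⟩
    have key : ∀ a c : ZMod 2, a + c + c = a := by decide
    funext e
    have hs : s(q.1, p.1) = s(p.1, q.1) := Sym2.eq_swap
    rw [hs, hf]
    exact (key _ _).symm⟩
  loopless := ⟨fun p h => G.loopless.irrefl p.1 h.1⟩

/-- The projection `π : G̃ → G` on vertices, as a graph homomorphism. -/
def liftProj (G T : SimpleGraph V) : liftGraph G T →g G :=
  ⟨Prod.fst, fun h => h.1⟩

/-- The projection `π` on edges of the lift. -/
def edgeProj (G T : SimpleGraph V) :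
    Sym2 (V × (nonTreeEdges G T → ZMod 2)) → Sym2 V :=
  Sym2.map Prod.fst

/-- Indicator (in `ZMod 2`) that an edge `s` joins the vertex set `B` to its complement:
it equals `1` iff exactly one endpoint of `s` lies in `B`. -/
def crossIndicator (B : Set V) : Sym2 V → ZMod 2 :=
  Sym2.lift ⟨fun p q => (if p ∈ B then 1 else 0) + (if q ∈ B then 1 else 0),
    fun p q => add_comm _ _⟩

/-- For a tree edge `e`, the side `B` of `T - e`: the component of `T - e` containing the
second endpoint of `e`. -/
def treeSide (T : SimpleGraph V) (e : Sym2 V) : Set V :=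
  {v | (T.deleteEdges {e}).Reachable (Quot.out e).2 v}

/-- The function `h_e` on the vertices of the lift: for `e ∈ S`, `h_e (v, f) = f e`;
for a tree edge `e`, `h_e (v, f)` is the indicator that `v` lies in the component `B`
of `T - e` plus the sum of the values `f s` over the edges `s ∈ S` joining the two
components of `T - e`. -/
def hcut (G T : SimpleGraph V) (e : Sym2 V) :
    V × (nonTreeEdges G T → ZMod 2) → ZMod 2 := fun p =>
  if he : e ∈ nonTreeEdges G T then p.2 ⟨e, he⟩
  else (if p.1 ∈ treeSide T e then 1 else 0) +
    ∑ᶠ s : nonTreeEdges G T, crossIndicator (treeSide T e) s * p.2 s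

/-- The cut-indicator map `F : V(G̃) → ℝ^{E(G)}`, `F(x)(e) = h_e(x) ∈ {0,1}`, with
`ℝ^{E(G)}` carrying the `ℓ₁`-norm. -/
def cutMap (G T : SimpleGraph V) :
    (V × (nonTreeEdges G T → ZMod 2)) → PiLp 1 (fun _ : G.edgeSet => ℝ) :=
  fun p => WithLp.toLp 1 (fun e => ((hcut G T e p).val : ℝ))

section aux
variable {V : Type*} {G T : SimpleGraph V}

lemma lift_adj_tree (hTG : T ≤ G) {u v : V} (h : T.Adj u v)
    (f : nonTreeEdges G T → ZMod 2) : (liftGraph G T).Adj (u, f) (v, f) := by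
  refine ⟨hTG h, ?_⟩
  funext e
  rw [if_neg, add_zero]
  intro hc
  exact e.2.2 (by rw [hc]; exact T.mem_edgeSet.2 h)

lemma lift_reachable_tree (hTG : T ≤ G) {u v : V} (h : T.Reachable u v)
    (f : nonTreeEdges G T → ZMod 2) : (liftGraph G T).Reachable (u, f) (v, f) := by
  obtain ⟨p⟩ := h
  induction p with
  | nil => exact SimpleGraph.Reachable.refl _
  | cons ha p ih => exact ((lift_adj_tree hTG ha f).reachable).trans ih

lemma lift_reachable_flip (hT : T.Connected) (hTG : T ≤ G) (u : V) (e : Sym2 V) :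
    ∀ (he : e ∈ nonTreeEdges G T) (f : nonTreeEdges G T → ZMod 2),
    (liftGraph G T).Reachable (u, f)
      (u, fun x => f x + if (x : Sym2 V) = e then 1 else 0) := by
  induction e using Sym2.ind with
  | _ a b =>
    intro he f
    have hGab : G.Adj a b := G.mem_edgeSet.1 he.1
    have h1 : (liftGraph G T).Adj (a, f)
        (b, fun x => f x + if (x : Sym2 V) = s(a, b) then 1 else 0) := ⟨hGab, rfl⟩
    have h2 := lift_reachable_tree hTG (hT.preconnected u a) f
    have h3 := lift_reachable_tree hTG (hT.preconnected b u)
      (fun x => f x + if (x : Sym2 V) = s(a, b) then 1 else 0)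
    exact (h2.trans h1.reachable).trans h3

lemma lift_fix (hT : T.Connected) (hTG : T ≤ G) (u : V) :
    ∀ (D : Finset (nonTreeEdges G T)) (f g : nonTreeEdges G T → ZMod 2),
      (∀ s, f s ≠ g s → s ∈ D) → (liftGraph G T).Reachable (u, f) (u, g) := by
  intro D
  induction D using Finset.induction_on with
  | empty =>
    intro f g h
    have hfg : f = g := funext fun s => not_not.1 fun hs => absurd (h s hs) (Finset.notMem_empty _)
    rw [hfg]
  | @insert s D hsD ih =>
    intro f g h
    by_cases hfg : f s = g s
    · refine ih f g fun t ht => ?_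
      rcases Finset.mem_insert.1 (h t ht) with rfl | h'
      · exact absurd hfg ht
      · exact h'
    · set g' : nonTreeEdges G T → ZMod 2 := fun x => if x = s then f s else g x with hg'
      have h1 : (liftGraph G T).Reachable (u, f) (u, g') := by
        refine ih f g' fun t ht => ?_
        by_cases hts : t = s
        · subst hts; simp [hg'] at ht
        · have hfgt : f t ≠ g t := by simpa [hg', hts] using ht
          exact (Finset.mem_insert.1 (h t hfgt)).resolve_left hts
      have heq : g = fun x => g' x + if (x : Sym2 V) = (s : Sym2 V) then 1 else 0 := by
        funext x
        by_cases hxs : x = s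
        · subst hxs
          have key : ∀ a b : ZMod 2, a ≠ b → b = a + 1 := by decide
          simp only [hg', if_pos rfl, if_pos]
          exact key _ _ hfg
        · have hval : (x : Sym2 V) ≠ (s : Sym2 V) := fun hc => hxs (Subtype.ext hc)
          simp [hg', hxs, hval]
      have h2 : (liftGraph G T).Reachable (u, g') (u, g) := by
        rw [heq]; exact lift_reachable_flip hT hTG u (s : Sym2 V) s.2 g'
      exact h1.trans h2

lemma lift_preconnected [Fintype V] (hT : T.Connected) (hTG : T ≤ G) :
    (liftGraph G T).Preconnected := by
  haveI : Fintype (nonTreeEdges G T) := Fintype.ofFinite _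
  rintro ⟨u, f⟩ ⟨v, g⟩
  exact (lift_reachable_tree hTG (hT.preconnected u v) f).trans
    (lift_fix hT hTG v Finset.univ f g fun s _ => Finset.mem_univ s)

end aux

section aux2
variable {V : Type*} {G T : SimpleGraph V}

lemma crossIndicator_mk (B : Set V) (a b : V) :
    crossIndicator B s(a, b) = (if a ∈ B then 1 else 0) + (if b ∈ B then 1 else 0) := rfl

lemma sum_flip [Fintype (nonTreeEdges G T)] (B : Set V)
    (f : nonTreeEdges G T → ZMod 2) (σ : nonTreeEdges G T) :
    (∑ᶠ s : nonTreeEdges G T,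
        crossIndicator B s * (f s + if (s : Sym2 V) = (σ : Sym2 V) then 1 else 0))
      = (∑ᶠ s : nonTreeEdges G T, crossIndicator B s * f s) + crossIndicator B σ := by
  rw [finsum_eq_sum_of_fintype, finsum_eq_sum_of_fintype]
  simp_rw [mul_add, Finset.sum_add_distrib]
  congr 1
  rw [Finset.sum_eq_single σ]
  · simp
  · intro b _ hb
    rw [if_neg (fun hc => hb (Subtype.ext hc)), mul_zero]
  · simp

lemma hcut_adj [Fintype V] (hT : T.IsTree) (hTG : T ≤ G)
    {x y : V × (nonTreeEdges G T → ZMod 2)} (hxy : (liftGraph G T).Adj x y) :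
    hcut G T s(x.1, y.1) x ≠ hcut G T s(x.1, y.1) y ∧
    ∀ e : Sym2 V, e ∈ G.edgeSet → e ≠ s(x.1, y.1) → hcut G T e x = hcut G T e y := by
  haveI : Fintype (nonTreeEdges G T) := Fintype.ofFinite _
  obtain ⟨u, f⟩ := x
  obtain ⟨v, g⟩ := y
  obtain ⟨hadj, hg⟩ := hxy
  simp only at hadj hg ⊢
  by_cases hS : s(u, v) ∈ nonTreeEdges G T
  · constructor
    · simp only [hcut, dif_pos hS, hg]
      rw [if_pos trivial]
      exact fun h => (by decide : ∀ a : ZMod 2, a ≠ a + 1) _ h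
    · intro e heG hne
      by_cases heS : e ∈ nonTreeEdges G T
      · simp only [hcut, dif_pos heS, hg]
        rw [if_neg hne, add_zero]
      · simp only [hcut, dif_neg heS, hg]
        rw [sum_flip (σ := ⟨s(u, v), hS⟩), crossIndicator_mk]
        have key : ∀ a b c : ZMod 2, a + c = b + (c + (a + b)) := by decide
        exact key _ _ _
  · have hsT : s(u, v) ∈ T.edgeSet := by
      by_contra h; exact hS ⟨G.mem_edgeSet.2 hadj, h⟩
    have hgf : g = f := by
      rw [hg]; funext e; rw [if_neg, add_zero]
      intro hc; exact e.2.2 (by rw [hc]; exact hsT)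
    subst hgf
    constructor
    · simp only [hcut, dif_neg hS]
      have hbridge : ¬(T.deleteEdges {s(u, v)}).Reachable u v := by
        have hb := (isAcyclic_iff_forall_adj_isBridge.1 hT.IsAcyclic) (T.mem_edgeSet.1 hsT)
        exact hb
      have hout : s((Quot.out s(u, v)).1, (Quot.out s(u, v)).2) = s(u, v) := by
        conv_rhs => rw [← Quot.out_eq s(u, v)]
      have hdiff : (if u ∈ treeSide T s(u, v) then (1 : ZMod 2) else 0) ≠
          (if v ∈ treeSide T s(u, v) then 1 else 0) := by
        rcases Sym2.eq_iff.1 hout with ⟨ha, hb⟩ | ⟨ha, hb⟩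
        · have hv : v ∈ treeSide T s(u, v) := by
            show (T.deleteEdges _).Reachable (Quot.out s(u, v)).2 v
            rw [hb]
          have hu : u ∉ treeSide T s(u, v) := fun h => by
            rw [treeSide, Set.mem_setOf_eq, hb] at h
            exact hbridge h.symm
          rw [if_neg hu, if_pos hv]
          exact zero_ne_one
        · have hu : u ∈ treeSide T s(u, v) := by
            show (T.deleteEdges _).Reachable (Quot.out s(u, v)).2 u
            rw [hb]
          have hv : v ∉ treeSide T s(u, v) := fun h => by
            rw [treeSide, Set.mem_setOf_eq, hb] at h
            exact hbridge h
          rw [if_pos hu, if_neg hv]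
          exact one_ne_zero
      intro h
      exact hdiff (add_right_cancel h)
    · intro e heG hne
      by_cases heS : e ∈ nonTreeEdges G T
      · simp only [hcut, dif_pos heS]
      · simp only [hcut, dif_neg heS]
        have hadj' : (T.deleteEdges {e}).Adj u v := by
          rw [SimpleGraph.deleteEdges_adj]
          exact ⟨T.mem_edgeSet.1 hsT, by simpa using hne.symm⟩
        have hiff : u ∈ treeSide T e ↔ v ∈ treeSide T e :=
          ⟨fun h => h.trans hadj'.reachable, fun h => h.trans hadj'.symm.reachable⟩
        rw [if_congr hiff rfl rfl]

end aux2

section aux3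
variable {V : Type*} {G T : SimpleGraph V}

lemma norm_adj [Fintype V] (hT : T.IsTree) (hTG : T ≤ G)
    {x y : V × (nonTreeEdges G T → ZMod 2)} (hxy : (liftGraph G T).Adj x y) :
    ‖cutMap G T x - cutMap G T y‖ = 1 := by
  obtain ⟨hne, heq⟩ := hcut_adj hT hTG hxy
  have huv : s(x.1, y.1) ∈ G.edgeSet := G.mem_edgeSet.2 hxy.1
  rw [PiLp.norm_eq_sum (p := 1) (by norm_num)]
  simp only [ENNReal.toReal_one, Real.rpow_one, one_div_one]
  rw [Finset.sum_eq_single (⟨s(x.1, y.1), huv⟩ : G.edgeSet)]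
  · have h01 : ∀ a b : ZMod 2, a ≠ b → (a.val = 0 ∧ b.val = 1) ∨ (a.val = 1 ∧ b.val = 0) := by
      decide
    show ‖(cutMap G T x - cutMap G T y) _‖ = 1
    have happ : (cutMap G T x - cutMap G T y) (⟨s(x.1, y.1), huv⟩ : G.edgeSet)
        = ((hcut G T s(x.1, y.1) x).val : ℝ) - ((hcut G T s(x.1, y.1) y).val : ℝ) := rfl
    rw [happ]
    rcases h01 _ _ hne with ⟨h1, h2⟩ | ⟨h1, h2⟩ <;> rw [h1, h2] <;> norm_num
  · intro e _ he
    have hcoe : (e : Sym2 V) ≠ s(x.1, y.1) := fun hc => he (Subtype.ext hc)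
    have happ : (cutMap G T x - cutMap G T y) e
        = ((hcut G T e x).val : ℝ) - ((hcut G T e y).val : ℝ) := rfl
    rw [happ, heq e e.2 hcoe, sub_self, norm_zero]
  · intro h
    exact absurd (Finset.mem_univ _) h

lemma norm_le_walk [Fintype V] (hT : T.IsTree) (hTG : T ≤ G)
    {x y : V × (nonTreeEdges G T → ZMod 2)} (p : (liftGraph G T).Walk x y) :
    ‖cutMap G T x - cutMap G T y‖ ≤ (p.length : ℝ) := by
  induction p with
  | nil => simp
  | @cons a b c ha q ih =>
    calc ‖cutMap G T a - cutMap G T c‖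
        ≤ ‖cutMap G T a - cutMap G T b‖ + ‖cutMap G T b - cutMap G T c‖ :=
          norm_sub_le_norm_sub_add_norm_sub _ _ _
      _ ≤ 1 + (q.length : ℝ) := add_le_add (le_of_eq (norm_adj hT hTG ha)) ih
      _ = ((q.cons ha).length : ℝ) := by rw [SimpleGraph.Walk.length_cons]; push_cast; ring

end aux3


/-- Let `G` be a finite connected simple graph, `T` a spanning tree of `G`, `G̃` the lift
of `G` with respect to `T`, and `F` the cut-indicator map. Then for every pair of adjacent
vertices `x, y` of `G̃`, `‖F(x) − F(y)‖₁ = 1`; consequently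
`‖F(x) − F(y)‖₁ ≤ d_{G̃}(x,y)` for all `x, y`, i.e. `F` is `1`-Lipschitz. -/
theorem cutMap_lipschitz {V : Type*} [Fintype V] (G T : SimpleGraph V)
    (hG : G.Connected) (hT : T.IsTree) (hTG : T ≤ G) :
    (∀ x y : V × (nonTreeEdges G T → ZMod 2), (liftGraph G T).Adj x y →
        ‖cutMap G T x - cutMap G T y‖ = 1) ∧
      ∀ x y : V × (nonTreeEdges G T → ZMod 2),
        ‖cutMap G T x - cutMap G T y‖ ≤ ((liftGraph G T).dist x y : ℝ) := by
  refine ⟨fun x y hxy => norm_adj hT hTG hxy, fun x y => ?_⟩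
  have hreach : (liftGraph G T).Reachable x y := lift_preconnected hT.isConnected hTG x y
  obtain ⟨p, hp⟩ := hreach.exists_walk_length_eq_dist
  rw [← hp]
  exact_mod_cast norm_le_walk hT hTG p

end
end

section
/- Let G be a finite connected simple graph, T a spanning tree of G, and G̃ the lift of G with respect to T. Let x, y ∈ V(G̃) and let P be a shortest path from x to y in G̃. If an edge e of G has multiplicity at least 2 in the projected walk π(P), then e is a cut edge (bridge) of the subgraph I(P) of G. -/
open SimpleGraph

noncomputable section
attribute [local instance] Classical.propDecidable

variable {V : Type*}

lemma walk_exists_split {G : SimpleGraph V} {u v : V} (W : G.Walk u v) {e : Sym2 V}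
    (he : e ∈ W.edges) :
    ∃ (a b : V) (ha : G.Adj a b) (W₁ : G.Walk u a) (W₂ : G.Walk b v),
      W = W₁.append (Walk.cons ha W₂) ∧ e = s(a, b) ∧ e ∉ W₁.edges := by
  induction W with
  | nil => simp at he
  | @cons u w v h W' ih =>
    by_cases hfirst : e = s(u, w)
    · exact ⟨u, w, h, Walk.nil, W', by rw [Walk.nil_append], hfirst, by simp⟩
    · have he' : e ∈ W'.edges := by
        rw [Walk.edges_cons, List.mem_cons] at he
        tauto
      obtain ⟨a, b, ha, W₁, W₂, hW, hee, hne⟩ := ih he'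
      refine ⟨a, b, ha, Walk.cons h W₁, W₂, ?_, hee, ?_⟩
      · rw [Walk.cons_append, hW]
      · rw [Walk.edges_cons, List.mem_cons]
        tauto

lemma walk_surgery {G : SimpleGraph V} {u v : V} (W : G.Walk u v) (e : Sym2 V)
    (h2 : 2 ≤ W.edges.count e)
    (hnb : ¬ (fromEdgeSet {e' : Sym2 V | e' ∈ W.edges}).IsBridge e) :
    ∃ W' : G.Walk u v, W'.length + 2 = W.length ∧
      ∀ s : Sym2 V, W'.edges.count s + (if s = e then 2 else 0) = W.edges.count s := by
  have he : e ∈ W.edges := List.count_pos_iff.mp (by omega)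
  obtain ⟨a, b, hab, W₁, Wr, hW, heab, hnW₁⟩ := walk_exists_split W he
  subst heab
  have hcW₁ : W₁.edges.count s(a, b) = 0 := List.count_eq_zero.mpr hnW₁
  have hmemr : s(a, b) ∈ Wr.edges := by
    rw [hW] at h2
    rw [Walk.edges_append, Walk.edges_cons, List.count_append, List.count_cons] at h2
    simp [hcW₁, beq_iff_eq] at h2
    exact h2
  obtain ⟨c, d, hcd, M, W₃, hWr, hecd, hnM⟩ := walk_exists_split Wr hmemr
  rcases Sym2.eq_iff.mp hecd with ⟨rfl, rfl⟩ | ⟨rfl, rfl⟩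
  · -- same direction: M : b → a, W₃ : b → v
    refine ⟨W₁.append (M.reverse.append W₃), ?_, ?_⟩
    · rw [hW, hWr]
      simp only [Walk.length_append, Walk.length_cons, Walk.length_reverse]
      omega
    · intro s
      rw [hW, hWr]
      simp only [Walk.edges_append, Walk.edges_cons, Walk.edges_reverse, List.count_append,
        List.count_cons, List.count_reverse, beq_iff_eq]
      by_cases hs : s = s(a, b)
      · subst hs; simp; omega
      · simp only [if_neg hs, if_neg (Ne.symm hs)]; omega
  · -- opposite direction: M : b → b, W₃ : a → v
    have hadjH : (fromEdgeSet {e' : Sym2 V | e' ∈ W.edges}).Adj a b := by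
      rw [fromEdgeSet_adj]
      refine ⟨?_, hab.ne⟩
      rw [hW]
      simp
    have hreach : ((fromEdgeSet {e' : Sym2 V | e' ∈ W.edges}) \ fromEdgeSet {s(a, b)}).Reachable a b := by
      rw [SimpleGraph.isBridge_iff] at hnb
      tauto
    obtain ⟨R⟩ := hreach
    have hE : W.edges = W₁.edges ++ s(a, b) :: (M.edges ++ s(b, a) :: W₃.edges) := by
      rw [hW, hWr, Walk.edges_append, Walk.edges_cons, Walk.edges_append, Walk.edges_cons]
    have key : ∃ c₀, c₀ ∈ M.support ∧ (c₀ ∈ W₁.support ∨ c₀ ∈ W₃.support) := by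
      by_cases haM : a ∈ M.support
      · exact ⟨a, haM, Or.inl W₁.end_mem_support⟩
      · obtain ⟨dt, hdmem, hdfst, hdsnd⟩ :=
          R.exists_boundary_dart {z | z ∉ M.support} haM (by simp [M.start_mem_support])
        obtain ⟨⟨p, q⟩, hpq⟩ := dt
        simp only [Set.mem_setOf_eq, not_not] at hdfst hdsnd
        rw [SimpleGraph.sdiff_adj, fromEdgeSet_adj, fromEdgeSet_adj] at hpq
        obtain ⟨⟨hmem, hne⟩, hnot⟩ := hpq
        have hnee : s(p, q) ≠ s(a, b) := by
          intro hcon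
          exact hnot ⟨by simp [hcon], hne⟩
        simp only [Set.mem_setOf_eq] at hmem
        rw [hE] at hmem
        simp only [List.mem_append, List.mem_cons] at hmem
        rcases hmem with h1 | (h1 | (h1 | (h1 | h1)))
        · exact ⟨q, hdsnd, Or.inl (W₁.snd_mem_support_of_mem_edges h1)⟩
        · exact absurd h1 hnee
        · exact absurd (M.fst_mem_support_of_mem_edges h1) hdfst
        · exact absurd (h1.trans Sym2.eq_swap) hnee
        · exact ⟨q, hdsnd, Or.inr (W₃.snd_mem_support_of_mem_edges h1)⟩
    obtain ⟨c₀, hcM, hc13⟩ := key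
    have hMspec := M.take_spec hcM
    have hMlen := congrArg Walk.length hMspec
    have hMedg := congrArg Walk.edges hMspec
    rw [Walk.length_append] at hMlen
    rw [Walk.edges_append] at hMedg
    rcases hc13 with hc1 | hc3
    · have hW₁spec := W₁.take_spec hc1
      have hW₁len := congrArg Walk.length hW₁spec
      have hW₁edg := congrArg Walk.edges hW₁spec
      rw [Walk.length_append] at hW₁len
      rw [Walk.edges_append] at hW₁edg
      refine ⟨(W₁.takeUntil c₀ hc1).append ((M.dropUntil c₀ hcM).append
        ((M.takeUntil c₀ hcM).append ((W₁.dropUntil c₀ hc1).append W₃))), ?_, ?_⟩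
      · rw [hW, hWr]
        simp only [Walk.length_append, Walk.length_cons]
        omega
      · intro s
        rw [hW, hWr]
        simp only [Walk.edges_append, Walk.edges_cons, List.count_append, List.count_cons,
          beq_iff_eq]
        have h1 : (W₁.takeUntil c₀ hc1).edges.count s + (W₁.dropUntil c₀ hc1).edges.count s
            = W₁.edges.count s := by rw [← hW₁edg, List.count_append]
        have hm2 : (M.takeUntil c₀ hcM).edges.count s + (M.dropUntil c₀ hcM).edges.count s
            = M.edges.count s := by rw [← hMedg, List.count_append]
        have hswap : s(b, a) = s(a, b) := Sym2.eq_swap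
        rw [hswap]
        by_cases hs : s = s(a, b)
        · subst hs; simp; omega
        · simp only [if_neg hs, if_neg (Ne.symm hs)]; omega
    · have hW₃spec := W₃.take_spec hc3
      have hW₃len := congrArg Walk.length hW₃spec
      have hW₃edg := congrArg Walk.edges hW₃spec
      rw [Walk.length_append] at hW₃len
      rw [Walk.edges_append] at hW₃edg
      refine ⟨W₁.append ((W₃.takeUntil c₀ hc3).append ((M.dropUntil c₀ hcM).append
        ((M.takeUntil c₀ hcM).append (W₃.dropUntil c₀ hc3)))), ?_, ?_⟩
      · rw [hW, hWr]
        simp only [Walk.length_append, Walk.length_cons]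
        omega
      · intro s
        rw [hW, hWr]
        simp only [Walk.edges_append, Walk.edges_cons, List.count_append, List.count_cons,
          beq_iff_eq]
        have h1 : (W₃.takeUntil c₀ hc3).edges.count s + (W₃.dropUntil c₀ hc3).edges.count s
            = W₃.edges.count s := by rw [← hW₃edg, List.count_append]
        have hm2 : (M.takeUntil c₀ hcM).edges.count s + (M.dropUntil c₀ hcM).edges.count s
            = M.edges.count s := by rw [← hMedg, List.count_append]
        have hswap : s(b, a) = s(a, b) := Sym2.eq_swap
        rw [hswap]
        by_cases hs : s = s(a, b)
        · subst hs; simp; omega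
        · simp only [if_neg hs, if_neg (Ne.symm hs)]; omega


lemma lift_sigma {G T : SimpleGraph V} {x y : V × (nonTreeEdges G T → ZMod 2)}
    (P : (liftGraph G T).Walk x y) (s : nonTreeEdges G T) :
    y.2 s = x.2 s + (((P.edges.map (edgeProj G T)).count ↑s : ℕ) : ZMod 2) := by
  induction P with
  | nil => simp
  | @cons x z y h P' ih =>
    rw [Walk.edges_cons]
    have hz := h.2
    have hproj : edgeProj G T s(x, z) = s(x.1, z.1) := by
      simp [edgeProj]
    rw [List.map_cons, hproj, List.count_cons]
    rw [ih, hz]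
    push_cast
    by_cases hs : (↑s : Sym2 V) = s(x.1, z.1)
    · simp [hs]
      ring
    · simp [hs, Ne.symm hs]

lemma lift_exists {G T : SimpleGraph V} {u v : V} (W : G.Walk u v)
    (f : nonTreeEdges G T → ZMod 2) :
    ∃ Q : (liftGraph G T).Walk (u, f) (v, fun s => f s + ((W.edges.count ↑s : ℕ) : ZMod 2)),
      Q.length = W.length := by
  induction W generalizing f with
  | nil =>
    refine ⟨Walk.nil.copy rfl (Prod.ext rfl ?_), (Walk.length_copy _ _ _).trans (by simp)⟩
    funext s
    simp
  | @cons u w v h W' ih =>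
    have hadj : (liftGraph G T).Adj (u, f)
        (w, fun s => f s + (if (↑s : Sym2 V) = s(u, w) then 1 else 0)) := ⟨h, rfl⟩
    obtain ⟨Q', hQ'⟩ := ih (fun s => f s + (if (↑s : Sym2 V) = s(u, w) then 1 else 0))
    refine ⟨(Walk.cons hadj Q').copy rfl (Prod.ext rfl ?_), (Walk.length_copy _ _ _).trans (by simp [hQ'])⟩
    funext s
    dsimp only
    rw [Walk.edges_cons, List.count_cons]
    push_cast
    by_cases hs : (↑s : Sym2 V) = s(u, w)
    · simp [hs]
      ring
    · simp [hs, Ne.symm hs]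

/-- Let `G` be a finite connected simple graph, `T` a spanning tree of `G`, and `G̃` the
lift of `G` with respect to `T`. Let `x, y ∈ V(G̃)` and let `P` be a shortest path from `x`
to `y` in `G̃`. If an edge `e` of `G` has multiplicity at least `2` in the projected walk
`π(P)`, then `e` is a cut edge (bridge) of the subgraph `I(P)` of `G` whose edges are the
edges traversed by `π(P)`. -/

theorem bridge_of_multiplicity_ge_two {V : Type*} [Fintype V] (G T : SimpleGraph V)
    (hG : G.Connected) (hT : T.IsTree) (hTG : T ≤ G)
    (x y : V × (nonTreeEdges G T → ZMod 2)) (P : (liftGraph G T).Walk x y)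
    (hpath : P.IsPath) (hshort : P.length = (liftGraph G T).dist x y)
    (e : Sym2 V) (hmult : 2 ≤ (P.edges.map (edgeProj G T)).count e) :
    (fromEdgeSet {e' : Sym2 V | e' ∈ P.edges.map (edgeProj G T)}).IsBridge e := by
  by_contra hnb
  have hedges : P.edges.map (edgeProj G T) = (P.map (liftProj G T)).edges := by
    rw [Walk.edges_map]
    rfl
  rw [hedges] at hmult hnb
  obtain ⟨W', hlen, hcount⟩ := walk_surgery (P.map (liftProj G T)) e hmult hnb
  obtain ⟨Q, hQlen⟩ := lift_exists (T := T) W' x.2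
  have hend : ((y.1 : V), fun s : nonTreeEdges G T =>
      x.2 s + ((W'.edges.count ↑s : ℕ) : ZMod 2)) = y := by
    refine Prod.ext rfl ?_
    funext s
    have hsig := lift_sigma P s
    rw [hedges] at hsig
    dsimp only
    rw [hsig, ← hcount ↑s]
    push_cast
    by_cases h : (↑s : Sym2 V) = e
    · simp only [h, if_pos rfl]
      push_cast
      have h2 : (2 : ZMod 2) = 0 := by decide
      rw [h2, add_zero]
    · simp [h]
  have hdist := SimpleGraph.dist_le (Q.copy Prod.mk.eta hend)
  replace hdist := hdist.trans_eq (Walk.length_copy _ _ _)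
  rw [hQlen] at hdist
  have hPlen : (P.map (liftProj G T)).length = P.length := Walk.length_map _ _
  omega

end
end
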